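/- Fiberwise form of Prop. 4.8 (torsion-free affine equations): Let (C, L) be a fiberwise pseudo-Finsler datum on ℝ^n (n ≥ 2) and let ℓ = (ℓ_i) : C → ℝ^n be smooth, positively 0-homogeneous, with ℓ_a y^a = 0 (the role played by the mean Landsberg tensor). For a smooth positively 2-homogeneous Z : C → ℝ^n set B_i := ((n+2)/2)(y_a/L) Z^a_{·i} − C_a Z^a_{·i} − Z^a_{·a·i}. Then the following are equivalent on C: (a) (ℓ_a + B_a)(δ_i^a y^j − y^a δ_i^j) = 0 for all i, j, where δ_i^a is the Kronecker delta (this is the affine equation for the symmetric difference ∂̇Z); (b) ℓ_i + B_i = 0 for all i; (c) Z satisfies both ℓ_i + ((n+2)/2)(y_a/L) Z^a_{·i} − C_a Z^a_{·i} − { (n+2)(y_a/L) Z^a − 2 C_a Z^a }_{·i} = 0 and (n+2)(y_a/L) Z^a − 2 C_a Z^a − Z^a_{·a} = 0. -/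

import Mathlib

open scoped BigOperators

noncomputable section

/-- Partial derivative `∂f/∂y^i`. -/
def pd {n : ℕ} (f : (Fin n → ℝ) → ℝ) (i : Fin n) : (Fin n → ℝ) → ℝ :=
  fun y => fderiv ℝ f y (Pi.single i 1)

/-- `C` is a conic set: stable under positive scalings. -/
def Conic {n : ℕ} (C : Set (Fin n → ℝ)) : Prop :=
  ∀ ⦃y⦄, y ∈ C → ∀ ⦃t : ℝ⦄, 0 < t → t • y ∈ C

/-- `f` is positively `α`-homogeneous on `C`. -/
def PosHom {n : ℕ} (α : ℝ) (C : Set (Fin n → ℝ)) (f : (Fin n → ℝ) → ℝ) : Prop :=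
  ∀ y ∈ C, ∀ t : ℝ, 0 < t → f (t • y) = t ^ α * f y

/-- Vector-valued positively `α`-homogeneous map on `C`. -/
def PosHomMap {n : ℕ} (α : ℝ) (C : Set (Fin n → ℝ)) (Z : (Fin n → ℝ) → Fin n → ℝ) : Prop :=
  ∀ y ∈ C, ∀ t : ℝ, 0 < t → Z (t • y) = t ^ α • Z y

/-- Fundamental tensor `g_ij(y) = (1/2) L_{·i·j}(y)`. -/
def gmet {n : ℕ} (L : (Fin n → ℝ) → ℝ) (y : Fin n → ℝ) : Matrix (Fin n) (Fin n) ℝ :=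
  Matrix.of fun i j => (1 / 2) * pd (pd L i) j y

/-- Inverse fundamental tensor `g^{ij}`. -/
def ginv {n : ℕ} (L : (Fin n → ℝ) → ℝ) (y : Fin n → ℝ) : Matrix (Fin n) (Fin n) ℝ :=
  (gmet L y)⁻¹

/-- Lowered index `y_i = g_{ia} y^a`. -/
def yLow {n : ℕ} (L : (Fin n → ℝ) → ℝ) (y : Fin n → ℝ) (i : Fin n) : ℝ :=
  ∑ a, gmet L y i a * y a

/-- Cartan tensor `C_{ijk} = (1/2) g_{ij·k}`. -/
def cartan {n : ℕ} (L : (Fin n → ℝ) → ℝ) (i j k : Fin n) : (Fin n → ℝ) → ℝ :=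
  fun y => (1 / 2) * pd (fun z => gmet L z i j) k y

/-- Mean Cartan tensor `C_i = g^{ab} C_{abi}`. -/
def meanCartan {n : ℕ} (L : (Fin n → ℝ) → ℝ) (i : Fin n) : (Fin n → ℝ) → ℝ :=
  fun y => ∑ a, ∑ b, ginv L y a b * cartan L a b i y

/-- A fiberwise pseudo-Finsler datum on `ℝ^n`. -/
structure FinslerDatum (n : ℕ) (C : Set (Fin n → ℝ)) (L : (Fin n → ℝ) → ℝ) : Prop where
  openC : IsOpen C
  nzC : ∀ y ∈ C, y ≠ 0
  conicC : Conic C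
  smoothL : ContDiffOn ℝ (⊤ : ℕ∞) L C
  homL : PosHom 2 C L
  LneC : ∀ y ∈ C, L y ≠ 0
  gInvC : ∀ y ∈ C, IsUnit (gmet L y).det

/-- Closure of `C` inside `ℝ^n ∖ {0}`. -/
def clos {n : ℕ} (C : Set (Fin n → ℝ)) : Set (Fin n → ℝ) := closure C \ {0}

/-- A proper fiberwise datum on `ℝ^n`. -/
structure ProperDatum (n : ℕ) (C U : Set (Fin n → ℝ)) (L : (Fin n → ℝ) → ℝ) : Prop where
  connC : IsConnected C
  openC : IsOpen C
  conicC : Conic C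
  nzC : ∀ y ∈ C, y ≠ 0
  openU : IsOpen U
  conicU : Conic U
  nzU : ∀ y ∈ U, y ≠ 0
  closSub : clos C ⊆ U
  smoothL : ContDiffOn ℝ (⊤ : ℕ∞) L U
  homL : PosHom 2 U L
  posC : ∀ y ∈ C, 0 < L y
  zeroBd : ∀ y ∈ clos C \ C, L y = 0
  gInvU : ∀ y ∈ U, IsUnit (gmet L y).det

/-- Lorentzian signature `(+,−,…,−)` of a symmetric matrix, via Sylvester normal form. -/
def LorentzSignature {n : ℕ} (g : Matrix (Fin n) (Fin n) ℝ) : Prop :=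
  ∃ P : Matrix (Fin n) (Fin n) ℝ, IsUnit P.det ∧
    P.transpose * g * P = Matrix.diagonal (fun i : Fin n => if (i : ℕ) = 0 then (1 : ℝ) else -1)

/-- A properly Lorentz fiberwise datum on `ℝ^n`. -/
structure LorentzDatum (n : ℕ) (C U : Set (Fin n → ℝ)) (L : (Fin n → ℝ) → ℝ)
    extends ProperDatum n C U L : Prop where
  lorentz : ∀ y ∈ clos C, LorentzSignature (gmet L y)
  halfspace : ∃ φ : (Fin n → ℝ) →ₗ[ℝ] ℝ, φ ≠ 0 ∧ ∀ v ∈ clos C, 0 < φ v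

/-- `σ^Z = y_a Z^a / L`. -/
def sigmaZ {n : ℕ} (L : (Fin n → ℝ) → ℝ) (Z : (Fin n → ℝ) → Fin n → ℝ) :
    (Fin n → ℝ) → ℝ :=
  fun y => (∑ a, yLow L y a * Z y a) / L y

/-- `K^Z_i = −(2/(n+2)) (2 C_{a·i} Z^a + C_a Z^a_{·i})`. -/
def Kten {n : ℕ} (L : (Fin n → ℝ) → ℝ) (Z : (Fin n → ℝ) → Fin n → ℝ) (i : Fin n) :
    (Fin n → ℝ) → ℝ :=
  fun y => -(2 / ((n : ℝ) + 2)) *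
    (2 * ∑ a, pd (meanCartan L a) i y * Z y a + ∑ a, meanCartan L a y * pd (fun z => Z z a) i y)

/-- `B^Z_i := ((n+2)/2)(y_a/L) Z^a_{·i} − C_a Z^a_{·i} − Z^a_{·a·i}`. -/
def Bfield {n : ℕ} (L : (Fin n → ℝ) → ℝ) (Z : (Fin n → ℝ) → Fin n → ℝ)
    (y : Fin n → ℝ) (i : Fin n) : ℝ :=
  (((n : ℝ) + 2) / 2) * ∑ a, yLow L y a / L y * pd (fun z => Z z a) i y
    - ∑ a, meanCartan L a y * pd (fun z => Z z a) i y
    - ∑ a, pd (fun z => pd (fun w => Z w a) a z) i y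

/-!
Condition (a) says that the matrix `G_i y^j − δ_i^j (G_a y^a)`, with `G := ℓ + B`, vanishes.
Since `y ≠ 0` and `n ≥ 2`, an off-diagonal entry in a column where `y` is nonzero kills `G`
away from that column, a diagonal entry then kills `G_a y^a`, and that column finally gives
`G = 0`: so (a) ⇔ (b).

For (b) ⇔ (c), contract `ℓ_i + B_i` with `y^i`. Since `ℓ_a y^a = 0`, and by Euler's theorem
for the 2-homogeneous `Z^a` and the 1-homogeneous `Z^a_{·a}`, the contraction is exactly the
left-hand side of the second equation of (c). Once that equation holds on the open set `C`,
it can be differentiated, turning `Z^a_{·a·i}` in `B_i` into the `·i`-derivative appearing in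
the first equation of (c).
-/

section KroneckerContraction

variable {ι K : Type*} [Fintype ι] [DecidableEq ι] [CommRing K]

lemma sum_mul_kronecker_sub (G y : ι → K) (i j : ι) :
    ∑ a, G a * ((if a = i then (1 : K) else 0) * y j - y a * (if j = i then (1 : K) else 0))
      = G i * y j - (if j = i then (1 : K) else 0) * ∑ a, G a * y a := by
  simp only [mul_sub, Finset.sum_sub_distrib, ite_mul, one_mul, zero_mul, mul_ite, mul_one,
    mul_zero, Finset.sum_ite_eq', Finset.mem_univ, if_true, Finset.mul_sum]

lemma forall_sum_mul_kronecker_sub_eq_zero_iff [Nontrivial ι] [NoZeroDivisors K]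
    {G y : ι → K} (hy : y ≠ 0) :
    (∀ i j, ∑ a, G a *
        ((if a = i then (1 : K) else 0) * y j - y a * (if j = i then (1 : K) else 0)) = 0)
      ↔ ∀ i, G i = 0 := by
  simp only [sum_mul_kronecker_sub]
  refine ⟨fun h => ?_, fun h i j => by simp [h]⟩
  obtain ⟨k, hk⟩ : ∃ k, y k ≠ 0 := Function.ne_iff.mp hy
  obtain ⟨m, hm⟩ := exists_ne k
  have off_column : ∀ i, i ≠ k → G i = 0 := fun i hik => by
    simpa [Ne.symm hik, hk] using h i k
  have hGy : ∑ a, G a * y a = 0 := by simpa [off_column m hm] using h m m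
  intro i
  simpa [hGy, hk] using h i k

end KroneckerContraction

section Derivatives

variable {n : ℕ} {C : Set (Fin n → ℝ)} {f g : (Fin n → ℝ) → ℝ} {y : Fin n → ℝ}

lemma sum_mul_pd_eq_fderiv :
    ∑ i, y i * pd f i y = fderiv ℝ f y y := by
  calc ∑ i, y i * pd f i y = ∑ i, fderiv ℝ f y (y i • Pi.single i 1) := by simp [pd]
    _ = fderiv ℝ f y y := by
      rw [← map_sum]
      congr 1
      ext j
      simp [Pi.single_apply]

lemma ContDiffOn.differentiableAt_pd (hC : IsOpen C) (hf : ContDiffOn ℝ 2 f C) (hy : y ∈ C)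
    (i : Fin n) : DifferentiableAt ℝ (pd f i) y :=
  (((hf.contDiffAt (hC.mem_nhds hy)).fderiv_right (m := 1) (by norm_num)).clm_apply
    contDiffAt_const).differentiableAt one_ne_zero

lemma pd_congr_of_eqOn (hC : IsOpen C) (hfg : Set.EqOn f g C) (hy : y ∈ C) (i : Fin n) :
    pd f i y = pd g i y := by
  simp only [pd, (hfg.eventuallyEq_of_mem (hC.mem_nhds hy)).fderiv_eq]

lemma pd_sum {F : Fin n → (Fin n → ℝ) → ℝ} (hF : ∀ a, DifferentiableAt ℝ (F a) y) (i : Fin n) :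
    pd (fun z => ∑ a, F a z) i y = ∑ a, pd (F a) i y := by
  simp only [pd, fderiv_fun_sum fun a _ => hF a, _root_.sum_apply]

end Derivatives

section Homogeneity

variable {n : ℕ} {α : ℝ} {C : Set (Fin n → ℝ)} {f : (Fin n → ℝ) → ℝ} {y : Fin n → ℝ}

theorem PosHom.sum_mul_pd (h : PosHom α C f) (hy : y ∈ C) (hf : DifferentiableAt ℝ f y) :
    ∑ i, y i * pd f i y = α * f y := by
  have along_ray : HasDerivAt (fun t : ℝ => f (t • y)) (fderiv ℝ f y y) 1 := by
    have hf' : HasFDerivAt f (fderiv ℝ f y) ((1 : ℝ) • y) := by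
      rw [one_smul]; exact hf.hasFDerivAt
    have ray : HasDerivAt (fun t : ℝ => t • y) y 1 := by
      simpa using (hasDerivAt_id (1 : ℝ)).smul_const y
    exact hf'.comp_hasDerivAt 1 ray
  have power : HasDerivAt (fun t : ℝ => t ^ α * f y) (α * f y) 1 := by
    simpa using (Real.hasDerivAt_rpow_const (x := 1) (p := α) (Or.inl one_ne_zero)).mul_const (f y)
  have hev : (fun t : ℝ => f (t • y)) =ᶠ[nhds 1] fun t => t ^ α * f y := by
    filter_upwards [eventually_gt_nhds one_pos] with t ht using h y hy t ht
  rw [sum_mul_pd_eq_fderiv, along_ray.unique (power.congr_of_eventuallyEq hev)]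

theorem PosHom.pd (hC : IsOpen C) (hconic : Conic C) (hf : DifferentiableOn ℝ f C)
    (h : PosHom α C f) (i : Fin n) : PosHom (α - 1) C (pd f i) := by
  intro y hy t ht
  have chain : HasFDerivAt (fun z => f (t • z))
      ((fderiv ℝ f (t • y)).comp (t • ContinuousLinearMap.id ℝ (Fin n → ℝ))) y :=
    (hf.differentiableAt (hC.mem_nhds (hconic hy ht))).hasFDerivAt.comp y
      ((hasFDerivAt_id y).const_smul t)
  have scaled : HasFDerivAt (fun z => f (t • z)) (t ^ α • fderiv ℝ f y) y := by
    refine ((hf.differentiableAt (hC.mem_nhds hy)).hasFDerivAt.const_mul _).congr_of_eventuallyEq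
      ?_
    filter_upwards [hC.mem_nhds hy] with z hz using h z hz t ht
  have key := congrArg (· (Pi.single i 1)) (chain.unique scaled)
  simp only [ContinuousLinearMap.comp_apply, _root_.smul_apply,
    ContinuousLinearMap.id_apply, map_smul, smul_eq_mul] at key
  rw [Real.rpow_sub_one ht.ne', div_mul_eq_mul_div, eq_div_iff ht.ne']
  simp only [_root_.pd]
  linarith

theorem PosHomMap.apply {Z : (Fin n → ℝ) → Fin n → ℝ} (h : PosHomMap α C Z) (a : Fin n) :
    PosHom α C (fun z => Z z a) :=
  fun y hy t ht => by simp [h y hy t ht]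

lemma sum_mul_sum_mul_pd {F : Fin n → (Fin n → ℝ) → ℝ} (hF : ∀ a, PosHom α C (F a))
    (hy : y ∈ C) (hFy : ∀ a, DifferentiableAt ℝ (F a) y) (c : Fin n → ℝ) :
    ∑ i, y i * ∑ a, c a * pd (F a) i y = α * ∑ a, c a * F a y := by
  calc ∑ i, y i * ∑ a, c a * pd (F a) i y = ∑ a, c a * ∑ i, y i * pd (F a) i y := by
        simp only [Finset.mul_sum]
        rw [Finset.sum_comm]
        exact Finset.sum_congr rfl fun a _ => Finset.sum_congr rfl fun i _ => by ring
    _ = α * ∑ a, c a * F a y := by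
        simp only [(hF _).sum_mul_pd hy (hFy _), Finset.mul_sum]
        exact Finset.sum_congr rfl fun a _ => by ring

end Homogeneity


section AffineEquations

variable {n : ℕ} {C : Set (Fin n → ℝ)} (L : (Fin n → ℝ) → ℝ) {Z : (Fin n → ℝ) → Fin n → ℝ}

lemma sum_mul_Bfield (hC : IsOpen C) (hconic : Conic C) (hZ : ContDiffOn ℝ 2 Z C)
    (hZhom : PosHomMap 2 C Z) {y : Fin n → ℝ} (hy : y ∈ C) :
    ∑ i, y i * Bfield L Z y i
      = ((n : ℝ) + 2) * ∑ a, yLow L y a / L y * Z y a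
        - 2 * ∑ a, meanCartan L a y * Z y a
        - ∑ a, pd (fun z => Z z a) a y := by
  have hZa : ∀ a, ContDiffOn ℝ 2 (fun z => Z z a) C := contDiffOn_pi.mp hZ
  have hZy : ∀ a, DifferentiableAt ℝ (fun z => Z z a) y := fun a =>
    ((hZa a).differentiableOn two_ne_zero).differentiableAt (hC.mem_nhds hy)
  have hdiv : ∀ a, PosHom 1 C (pd (fun z => Z z a) a) := fun a => by
    simpa [show (2 : ℝ) - 1 = 1 by norm_num] using (hZhom.apply a).pd hC hconic
      ((hZa a).differentiableOn two_ne_zero) a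
  have euler_div := sum_mul_sum_mul_pd hdiv hy
    (fun a => (hZa a).differentiableAt_pd hC hy a) 1
  simp only [Pi.one_apply, one_mul] at euler_div
  simp only [Bfield, mul_sub, Finset.sum_sub_distrib, mul_left_comm _ (((n : ℝ) + 2) / 2),
    ← Finset.mul_sum, sum_mul_sum_mul_pd hZhom.apply hy hZy, euler_div]
  ring

theorem forall_add_Bfield_eq_zero_iff (hC : IsOpen C) (hconic : Conic C)
    (hZ : ContDiffOn ℝ 2 Z C) (hZhom : PosHomMap 2 C Z) {ℓ : (Fin n → ℝ) → Fin n → ℝ}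
    (hℓy : ∀ y ∈ C, ∑ a, ℓ y a * y a = 0) :
    (∀ y ∈ C, ∀ i : Fin n, ℓ y i + Bfield L Z y i = 0)
      ↔ ((∀ y ∈ C, ∀ i : Fin n,
            ℓ y i + (((n : ℝ) + 2) / 2) * ∑ a, yLow L y a / L y * pd (fun z => Z z a) i y
              - ∑ a, meanCartan L a y * pd (fun z => Z z a) i y
              - pd (fun z => ((n : ℝ) + 2) * ∑ a, yLow L z a / L z * Z z a
                  - 2 * ∑ a, meanCartan L a z * Z z a) i y = 0)
          ∧ (∀ y ∈ C,
            ((n : ℝ) + 2) * ∑ a, yLow L y a / L y * Z y a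
              - 2 * ∑ a, meanCartan L a y * Z y a
              - ∑ a, pd (fun z => Z z a) a y = 0)) := by
  have pd_of_trace_eq : (∀ y ∈ C,
        ((n : ℝ) + 2) * ∑ a, yLow L y a / L y * Z y a
          - 2 * ∑ a, meanCartan L a y * Z y a
          - ∑ a, pd (fun z => Z z a) a y = 0) →
      ∀ y ∈ C, ∀ i : Fin n,
        pd (fun z => ((n : ℝ) + 2) * ∑ a, yLow L z a / L z * Z z a
            - 2 * ∑ a, meanCartan L a z * Z z a) i y
          = ∑ a, pd (fun z => pd (fun w => Z w a) a z) i y := fun h y hy i => by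
    rw [pd_congr_of_eqOn hC (g := fun z => ∑ a, pd (fun w => Z w a) a z)
        (fun z hz => by linarith [h z hz]) hy,
      pd_sum fun a => (contDiffOn_pi.mp hZ a).differentiableAt_pd hC hy a]
  constructor
  · intro hb
    have trace_eq : ∀ y ∈ C,
        ((n : ℝ) + 2) * ∑ a, yLow L y a / L y * Z y a
          - 2 * ∑ a, meanCartan L a y * Z y a
          - ∑ a, pd (fun z => Z z a) a y = 0 := fun y hy => by
      rw [← sum_mul_Bfield L hC hconic hZ hZhom hy]
      calc ∑ i, y i * Bfield L Z y i
          = ∑ i, y i * (ℓ y i + Bfield L Z y i) - ∑ a, ℓ y a * y a := by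
            simp only [mul_add, Finset.sum_add_distrib, mul_comm (ℓ _ _)]
            ring
        _ = 0 := by simp [hb y hy, hℓy y hy]
    refine ⟨fun y hy i => ?_, trace_eq⟩
    have := hb y hy i
    rw [pd_of_trace_eq trace_eq y hy i]
    simp only [Bfield] at this
    linarith
  · rintro ⟨h47, h48⟩ y hy i
    have := h47 y hy i
    rw [pd_of_trace_eq h48 y hy i] at this
    simp only [Bfield]
    linarith

end AffineEquations

theorem torsion_free_affine_equations_prop_4_8_general
    {n : ℕ} (hn : 2 ≤ n) (C : Set (Fin n → ℝ)) (L : (Fin n → ℝ) → ℝ)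
    (hD : FinslerDatum n C L)
    (ℓ : (Fin n → ℝ) → Fin n → ℝ)
    (hℓy : ∀ y ∈ C, ∑ a, ℓ y a * y a = 0)
    (Z : (Fin n → ℝ) → Fin n → ℝ)
    (hZsmooth : ContDiffOn ℝ (⊤ : ℕ∞) Z C) (hZhom : PosHomMap 2 C Z) :
    ((∀ y ∈ C, ∀ i j : Fin n,
        ∑ a, (ℓ y a + Bfield L Z y a) *
          ((if a = i then (1 : ℝ) else 0) * y j - y a * (if j = i then (1 : ℝ) else 0)) = 0)
      ↔ (∀ y ∈ C, ∀ i : Fin n, ℓ y i + Bfield L Z y i = 0))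
    ∧ ((∀ y ∈ C, ∀ i : Fin n, ℓ y i + Bfield L Z y i = 0)
      ↔ ((∀ y ∈ C, ∀ i : Fin n,
            ℓ y i + (((n : ℝ) + 2) / 2) * ∑ a, yLow L y a / L y * pd (fun z => Z z a) i y
              - ∑ a, meanCartan L a y * pd (fun z => Z z a) i y
              - pd (fun z => ((n : ℝ) + 2) * ∑ a, yLow L z a / L z * Z z a
                  - 2 * ∑ a, meanCartan L a z * Z z a) i y = 0)
          ∧ (∀ y ∈ C,
            ((n : ℝ) + 2) * ∑ a, yLow L y a / L y * Z y a
              - 2 * ∑ a, meanCartan L a y * Z y a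
              - ∑ a, pd (fun z => Z z a) a y = 0))) := by
  have : Nontrivial (Fin n) := Fin.nontrivial_iff_two_le.mpr hn
  exact ⟨forall₂_congr fun y hy =>
      forall_sum_mul_kronecker_sub_eq_zero_iff (G := fun a => ℓ y a + Bfield L Z y a) (hD.nzC y hy),
    forall_add_Bfield_eq_zero_iff L hD.openC hD.conicC
      (hZsmooth.of_le (WithTop.coe_le_coe.mpr le_top)) hZhom hℓy⟩

/-- **Fiberwise form of Prop. 4.8** (torsion-free affine equations). For a fiberwise
pseudo-Finsler datum `(C, L)`, a 0-homogeneous `ℓ` with `ℓ_a y^a = 0` and a 2-homogeneous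
`Z`, the following are equivalent on `C`:
(a) `(ℓ_a + B_a)(δ_i^a y^j − y^a δ_i^j) = 0`;
(b) `ℓ_i + B_i = 0`;
(c) the pair of torsion-free affine equations (4.7) and (4.8). -/
theorem torsion_free_affine_equations_prop_4_8
    {n : ℕ} (hn : 2 ≤ n) (C : Set (Fin n → ℝ)) (L : (Fin n → ℝ) → ℝ)
    (hD : FinslerDatum n C L)
    (ℓ : (Fin n → ℝ) → Fin n → ℝ)
    (hℓsmooth : ContDiffOn ℝ (⊤ : ℕ∞) ℓ C) (hℓhom : PosHomMap 0 C ℓ)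
    (hℓy : ∀ y ∈ C, ∑ a, ℓ y a * y a = 0)
    (Z : (Fin n → ℝ) → Fin n → ℝ)
    (hZsmooth : ContDiffOn ℝ (⊤ : ℕ∞) Z C) (hZhom : PosHomMap 2 C Z) :
    ((∀ y ∈ C, ∀ i j : Fin n,
        ∑ a, (ℓ y a + Bfield L Z y a) *
          ((if a = i then (1 : ℝ) else 0) * y j - y a * (if j = i then (1 : ℝ) else 0)) = 0)
      ↔ (∀ y ∈ C, ∀ i : Fin n, ℓ y i + Bfield L Z y i = 0))
    ∧ ((∀ y ∈ C, ∀ i : Fin n, ℓ y i + Bfield L Z y i = 0)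
      ↔ ((∀ y ∈ C, ∀ i : Fin n,
            ℓ y i + (((n : ℝ) + 2) / 2) * ∑ a, yLow L y a / L y * pd (fun z => Z z a) i y
              - ∑ a, meanCartan L a y * pd (fun z => Z z a) i y
              - pd (fun z => ((n : ℝ) + 2) * ∑ a, yLow L z a / L z * Z z a
                  - 2 * ∑ a, meanCartan L a z * Z z a) i y = 0)
          ∧ (∀ y ∈ C,
            ((n : ℝ) + 2) * ∑ a, yLow L y a / L y * Z y a
              - 2 * ∑ a, meanCartan L a y * Z y a
              - ∑ a, pd (fun z => Z z a) a y = 0))) :=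
  torsion_free_affine_equations_prop_4_8_general hn C L hD ℓ hℓy Z hZsmooth hZhom
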